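/- arXiv:2006.11266 — 7 statements merged into one kernel-verified Lean document; each statement's English description precedes it below -/
import Mathlib

section
/- Fix θ₀ ∈ ℝ^d. The gradient at θ = θ₀ of the map θ ↦ KL(Rπ_{θ₀} ‖ π_θ) equals −(1/J(θ₀)) · ∇J(θ₀), where ∇J(θ₀) = Σ_τ R(τ) π_{θ₀}(τ) ∇_θ log π_θ(τ)|_{θ=θ₀} is the REINFORCE policy-gradient update. In particular, a gradient-descent step on θ ↦ KL(Rπ_{θ₀} ‖ π_θ) at θ₀ moves in the direction of a positive multiple of the REINFORCE gradient-ascent step. -/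
/-- Expected return `J(π) = ∑ τ, R τ * π τ`. -/
noncomputable def Jexp {T : Type*} [Fintype T] (R π : T → ℝ) : ℝ := ∑ τ, R τ * π τ

/-- Improved policy `Rπ(τ) = R τ * π τ / J(π)`. -/
noncomputable def impPolicy {T : Type*} [Fintype T] (R π : T → ℝ) (τ : T) : ℝ :=
  R τ * π τ / Jexp R π

/-- KL divergence between pmfs on a finite type (with `0 * log 0 = 0`). -/
noncomputable def klDiv {T : Type*} [Fintype T] (p q : T → ℝ) : ℝ :=
  ∑ τ, p τ * Real.log (p τ / q τ)

/-!
Only the cross-entropy term `-∑ τ, p τ * log (π_θ τ)` of `KL(p ‖ π_θ)` depends on `θ`, so its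
gradient is `-∑ τ, p τ • ∇ log π_θ(τ)`. For `p = Rπ_{θ₀}` this is
`-(1 / J) • ∑ τ, (R τ * π_{θ₀} τ) • ∇ log π_θ(τ)`, and by the log-derivative trick
`π • ∇ log π = ∇ π` the last sum is `∇J(θ₀)`.
-/

section Gradient

variable {F : Type*} [NormedAddCommGroup F] [InnerProductSpace ℝ F] [CompleteSpace F]
  {f : F → ℝ} {f' x : F}

theorem HasGradientAt.const_mul (c : ℝ) (h : HasGradientAt f f' x) :
    HasGradientAt (fun y => c * f y) (c • f') x := by
  rw [hasGradientAt_iff_hasFDerivAt] at h ⊢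
  simpa [map_smulₛₗ] using h.const_mul c

theorem HasGradientAt.const_sub (c : ℝ) (h : HasGradientAt f f' x) :
    HasGradientAt (fun y => c - f y) (-f') x := by
  rw [hasGradientAt_iff_hasFDerivAt] at h ⊢
  simpa using h.const_sub c

theorem HasGradientAt.log (h : HasGradientAt f f' x) (hx : f x ≠ 0) :
    HasGradientAt (fun y => Real.log (f y)) ((f x)⁻¹ • f') x := by
  rw [hasGradientAt_iff_hasFDerivAt] at h ⊢
  simpa [map_smulₛₗ, smul_smul] using h.log hx

theorem HasGradientAt.sum {ι : Type*} (s : Finset ι) {g : ι → F → ℝ} {g' : ι → F}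
    (h : ∀ i ∈ s, HasGradientAt (g i) (g' i) x) :
    HasGradientAt (fun y => ∑ i ∈ s, g i y) (∑ i ∈ s, g' i) x := by
  rw [hasGradientAt_iff_hasFDerivAt, map_sum]
  exact HasFDerivAt.fun_sum fun i hi => h i hi

end Gradient

section Policy

variable {T : Type*} [Fintype T] {F : Type*} [NormedAddCommGroup F] [InnerProductSpace ℝ F]
  [CompleteSpace F] {π : F → T → ℝ} {x : F}

theorem klDiv_eq_sum_sub (p q : T → ℝ) (hq : ∀ τ, q τ ≠ 0) :
    klDiv p q = ∑ τ, (p τ * Real.log (p τ) - p τ * Real.log (q τ)) := by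
  refine Finset.sum_congr rfl fun τ _ => ?_
  rcases eq_or_ne (p τ) 0 with hp | hp
  · simp [hp]
  · rw [Real.log_div hp (hq τ), mul_sub]

theorem hasGradientAt_klDiv_right (p : T → ℝ) (hπ : ∀ θ τ, π θ τ ≠ 0)
    (hdiff : ∀ τ, DifferentiableAt ℝ (fun θ => π θ τ) x) :
    HasGradientAt (fun θ => klDiv p (π θ))
      (-∑ τ, p τ • gradient (fun θ => Real.log (π θ τ)) x) x := by
  simp only [klDiv_eq_sum_sub p _ (hπ _), ← Finset.sum_neg_distrib]
  refine HasGradientAt.sum _ fun τ _ => ?_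
  have hlog := (hdiff τ).hasGradientAt.log (hπ x τ)
  rw [hlog.gradient]
  exact (hlog.const_mul (p τ)).const_sub _

theorem hasGradientAt_Jexp (R : T → ℝ) (hπ : ∀ τ, π x τ ≠ 0)
    (hdiff : ∀ τ, DifferentiableAt ℝ (fun θ => π θ τ) x) :
    HasGradientAt (fun θ => Jexp R (π θ))
      (∑ τ, (R τ * π x τ) • gradient (fun θ => Real.log (π θ τ)) x) x := by
  unfold Jexp
  convert HasGradientAt.sum Finset.univ fun τ _ => (hdiff τ).hasGradientAt.const_mul (R τ)
    using 2 with τ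
  rw [((hdiff τ).hasGradientAt.log (hπ τ)).gradient, smul_smul, mul_assoc, mul_inv_cancel₀ (hπ τ),
    mul_one]

end Policy

theorem operator_reinforce_trajectory_general
    {T : Type*} [Fintype T] {d : ℕ}
    (R : T → ℝ)
    (π : EuclideanSpace ℝ (Fin d) → T → ℝ)
    (hπpos : ∀ θ τ, 0 < π θ τ)
    (hπdiff : ∀ τ, Differentiable ℝ (fun θ => π θ τ))
    (θ₀ : EuclideanSpace ℝ (Fin d))
    (J : EuclideanSpace ℝ (Fin d) → ℝ) (hJ : J = fun θ => Jexp R (π θ)) :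
    gradient (fun θ => klDiv (impPolicy R (π θ₀)) (π θ)) θ₀
        = -(1 / J θ₀) • gradient J θ₀ ∧
      gradient J θ₀
        = ∑ τ, (R τ * π θ₀ τ) • gradient (fun θ => Real.log (π θ τ)) θ₀ := by
  have hπ : ∀ θ τ, π θ τ ≠ 0 := fun θ τ => (hπpos θ τ).ne'
  have hdiff : ∀ τ, DifferentiableAt ℝ (fun θ => π θ τ) θ₀ := fun τ => (hπdiff τ).differentiableAt
  have hJgrad := (hasGradientAt_Jexp R (hπ θ₀) hdiff).gradient
  subst hJ
  refine ⟨?_, hJgrad⟩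
  rw [(hasGradientAt_klDiv_right _ hπ hdiff).gradient, hJgrad, Finset.smul_sum,
    ← Finset.sum_neg_distrib]
  refine Finset.sum_congr rfl fun τ _ => ?_
  rw [smul_smul, ← neg_smul, impPolicy]
  ring_nf

/-- The gradient at `θ = θ₀` of `θ ↦ KL(Rπ_{θ₀} ‖ π_θ)` equals `-(1 / J(θ₀)) • ∇J(θ₀)`,
where `∇J(θ₀) = ∑ τ, R τ * π_{θ₀} τ • ∇ log π_θ(τ)|_{θ₀}` is the REINFORCE update. -/
theorem operator_reinforce_trajectory
    {T : Type*} [Fintype T] [Nonempty T] {d : ℕ}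
    (R : T → ℝ) (hR : ∀ τ, 0 < R τ)
    (π : EuclideanSpace ℝ (Fin d) → T → ℝ)
    (hπpos : ∀ θ τ, 0 < π θ τ)
    (hπsum : ∀ θ, ∑ τ, π θ τ = 1)
    (hπdiff : ∀ τ, Differentiable ℝ (fun θ => π θ τ))
    (θ₀ : EuclideanSpace ℝ (Fin d))
    (J : EuclideanSpace ℝ (Fin d) → ℝ) (hJ : J = fun θ => Jexp R (π θ)) :
    gradient (fun θ => klDiv (impPolicy R (π θ₀)) (π θ)) θ₀
        = -(1 / J θ₀) • gradient J θ₀ ∧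
      gradient J θ₀
        = ∑ τ, (R τ * π θ₀ τ) • gradient (fun θ => Real.log (π θ τ)) θ₀ :=
  operator_reinforce_trajectory_general R π hπpos hπdiff θ₀ J hJ
end

section
/- If θ* ∈ ℝ^d satisfies ∇J(θ*) = 0 (i.e., θ* is a stationary point of the expected return), then θ* is a critical point of the map θ ↦ KL(Rπ_{θ*} ‖ π_θ); that is, the gradient of this map at θ = θ* is zero. Hence the optimal policy π_{θ*} is a fixed point of the composition of the improvement operator I_τ : π ↦ Rπ and the KL projection onto the parameterized policy class. -/
/-!
The improved policy satisfies `Rπ_{θ*}(τ) / π_{θ*}(τ) = R(τ) / J(θ*)`, so the gradient at `θ*` of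
the cross-entropy term `-∑ Rπ_{θ*}(τ) log π_θ(τ)` is `-∇J(θ*) / J(θ*)`, which vanishes with `∇J(θ*)`.
-/

theorem hasDerivAt_mul_log_const_div (c : ℝ) {t : ℝ} (ht : t ≠ 0) :
    HasDerivAt (fun s => c * Real.log (c / s)) (-(c / t)) t := by
  rcases eq_or_ne c 0 with rfl | hc
  · simpa using hasDerivAt_const t (0 : ℝ)
  have hlog := (((hasDerivAt_inv ht).const_mul c).log (by positivity)).const_mul c
  simp only [← div_eq_mul_inv] at hlog
  exact hlog.congr_deriv (by field_simp)

section

variable {E : Type*} [NormedAddCommGroup E] [NormedSpace ℝ E] {T : Type*} [Fintype T]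
  {q : E → T → ℝ} {q' : T → E →L[ℝ] ℝ} {x : E}

theorem hasFDerivAt_Jexp (R : T → ℝ) (hq : ∀ τ, HasFDerivAt (fun y => q y τ) (q' τ) x) :
    HasFDerivAt (fun y => Jexp R (q y)) (∑ τ, R τ • q' τ) x := by
  unfold Jexp
  exact HasFDerivAt.fun_sum fun τ _ => (hq τ).const_mul (R τ)

theorem hasFDerivAt_klDiv_right (p : T → ℝ) (hq : ∀ τ, HasFDerivAt (fun y => q y τ) (q' τ) x)
    (hx : ∀ τ, q x τ ≠ 0) :
    HasFDerivAt (fun y => klDiv p (q y)) (∑ τ, (-(p τ / q x τ)) • q' τ) x := by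
  unfold klDiv
  exact HasFDerivAt.fun_sum fun τ _ =>
    (hasDerivAt_mul_log_const_div (p τ) (hx τ)).comp_hasFDerivAt (f := fun y => q y τ) x (hq τ)

theorem impPolicy_div_self (R q : T → ℝ) {τ : T} (hq : q τ ≠ 0) :
    impPolicy R q τ / q τ = (Jexp R q)⁻¹ * R τ := by
  unfold impPolicy
  field_simp

theorem hasFDerivAt_klDiv_impPolicy_right (R : T → ℝ)
    (hq : ∀ τ, HasFDerivAt (fun y => q y τ) (q' τ) x) (hx : ∀ τ, q x τ ≠ 0) :
    HasFDerivAt (fun y => klDiv (impPolicy R (q x)) (q y))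
      (-(Jexp R (q x))⁻¹ • ∑ τ, R τ • q' τ) x := by
  convert hasFDerivAt_klDiv_right (impPolicy R (q x)) hq hx using 1
  simp only [impPolicy_div_self R (q x) (hx _), Finset.smul_sum, smul_smul, neg_mul]

end

theorem gradient_klDiv_impPolicy_right {F : Type*} [NormedAddCommGroup F] [InnerProductSpace ℝ F]
    [CompleteSpace F] {T : Type*} [Fintype T] (R : T → ℝ) {q : F → T → ℝ} {x : F}
    (hq : ∀ τ, DifferentiableAt ℝ (fun y => q y τ) x) (hx : ∀ τ, q x τ ≠ 0) :
    gradient (fun y => klDiv (impPolicy R (q x)) (q y)) x =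
      -(Jexp R (q x))⁻¹ • gradient (fun y => Jexp R (q y)) x := by
  have hq' := fun τ => (hq τ).hasFDerivAt
  simp only [gradient, (hasFDerivAt_klDiv_impPolicy_right R hq' hx).fderiv,
    (hasFDerivAt_Jexp R hq').fderiv, map_smul, neg_smul]

theorem fixed_point_operator_reinforce_trajectory_general
    {T : Type*} [Fintype T] {d : ℕ}
    (R : T → ℝ)
    (π : EuclideanSpace ℝ (Fin d) → T → ℝ)
    (hπpos : ∀ θ τ, 0 < π θ τ)
    (hπdiff : ∀ τ, Differentiable ℝ (fun θ => π θ τ))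
    (θs : EuclideanSpace ℝ (Fin d))
    (hstat : gradient (fun θ => Jexp R (π θ)) θs = 0) :
    gradient (fun θ => klDiv (impPolicy R (π θs)) (π θ)) θs = 0 := by
  rw [gradient_klDiv_impPolicy_right R (fun τ => hπdiff τ θs) (fun τ => (hπpos θs τ).ne'),
    hstat, smul_zero]

/-- If `θ*` is a stationary point of the expected return `J`, then `θ*` is a critical point
of `θ ↦ KL(Rπ_{θ*} ‖ π_θ)`: the optimal policy is a fixed point of the composition of the
improvement operator `I_τ : π ↦ Rπ` and the KL projection onto the policy class. -/
theorem fixed_point_operator_reinforce_trajectory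
    {T : Type*} [Fintype T] [Nonempty T] {d : ℕ}
    (R : T → ℝ) (hR : ∀ τ, 0 < R τ)
    (π : EuclideanSpace ℝ (Fin d) → T → ℝ)
    (hπpos : ∀ θ τ, 0 < π θ τ)
    (hπsum : ∀ θ, ∑ τ, π θ τ = 1)
    (hπdiff : ∀ τ, Differentiable ℝ (fun θ => π θ τ))
    (θs : EuclideanSpace ℝ (Fin d))
    (hstat : gradient (fun θ => Jexp R (π θ)) θs = 0) :
    gradient (fun θ => klDiv (impPolicy R (π θs)) (π θ)) θs = 0 :=
  fixed_point_operator_reinforce_trajectory_general R π hπpos hπdiff θs hstat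
end

section
/- Let f : ℝ → ℝ be monotone (nondecreasing) with f(x) > 0 for all x, and define the reweighted policy f(R)π by (f(R)π)(τ) = f(R(τ))π(τ)/E_π[f∘R], where E_π[f∘R] = Σ_τ f(R(τ))π(τ). Then J(f(R)π) = J(π) + Cov_π(R, f∘R)/E_π[f∘R], where Cov_π(R, f∘R) = Σ_τ π(τ) R(τ) f(R(τ)) − J(π)·E_π[f∘R]; in particular Cov_π(R, f∘R) ≥ 0 and hence J(f(R)π) ≥ J(π). -/
/-- Expectation of `f ∘ R` under `π`: `E_π[f∘R] = ∑ τ, f (R τ) * π τ`. -/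
noncomputable def expFR {T : Type*} [Fintype T] (f : ℝ → ℝ) (R π : T → ℝ) : ℝ :=
  ∑ τ, f (R τ) * π τ

/-- Reweighted policy `(f(R)π)(τ) = f (R τ) * π τ / E_π[f∘R]`. -/
noncomputable def reweightF {T : Type*} [Fintype T] (f : ℝ → ℝ) (R π : T → ℝ) (τ : T) : ℝ :=
  f (R τ) * π τ / expFR f R π

/-- Covariance `Cov_π(R, f∘R) = ∑ τ, π τ * R τ * f (R τ) − J(π) * E_π[f∘R]`. -/
noncomputable def covRFR {T : Type*} [Fintype T] (f : ℝ → ℝ) (R π : T → ℝ) : ℝ :=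
  (∑ τ, π τ * R τ * f (R τ)) - Jexp R π * expFR f R π

/-! Reweighting by `f ∘ R` changes the expected return by `Cov_π(R, f ∘ R) / E_π[f ∘ R]`, a direct
computation. The covariance is nonnegative by the weighted form of Chebyshev's sum inequality:
`2 Cov_π(R, f ∘ R) = ∑ a, ∑ b, π a π b (R a - R b) (f (R a) - f (R b))`, and each summand is
nonnegative because `R` and `f ∘ R` vary in the same direction. -/

open Finset

section WeightedChebyshev

variable {ι : Type*} [Fintype ι] {w g h : ι → ℝ}

lemma sum_mul_pos_of_sum_ne_zero (hg : ∀ i, 0 < g i) (hw : ∀ i, 0 ≤ w i)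
    (hw_sum : ∑ i, w i ≠ 0) : 0 < ∑ i, g i * w i := by
  obtain ⟨i, -, hi⟩ := exists_ne_zero_of_sum_ne_zero hw_sum
  exact sum_pos' (fun j _ => mul_nonneg (hg j).le (hw j))
    ⟨i, mem_univ i, mul_pos (hg i) ((hw i).lt_of_ne' hi)⟩

lemma Monovary.sum_mul_mul_sum_le_sum_mul_sum (hgh : Monovary g h) (hw : ∀ i, 0 ≤ w i) :
    (∑ i, g i * w i) * (∑ i, h i * w i) ≤ (∑ i, w i) * ∑ i, w i * g i * h i := by
  have hdouble : ∑ i, ∑ j, w i * w j * ((g i - g j) * (h i - h j))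
      = 2 * ((∑ i, w i) * (∑ i, w i * g i * h i) - (∑ i, g i * w i) * (∑ i, h i * w i)) := by
    have hexpand : ∀ i j, w i * w j * ((g i - g j) * (h i - h j))
        = (w i * g i * h i) * w j + w i * (w j * g j * h j)
          - (g i * w i) * (h j * w j) - (h i * w i) * (g j * w j) := fun i j => by ring
    simp only [hexpand, sum_sub_distrib, sum_add_distrib, ← sum_mul, ← mul_sum]
    ring
  have hnonneg : 0 ≤ ∑ i, ∑ j, w i * w j * ((g i - g j) * (h i - h j)) :=
    sum_nonneg fun i _ => sum_nonneg fun j _ =>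
      mul_nonneg (mul_nonneg (hw i) (hw j)) (hgh.sub_mul_sub_nonneg j i)
  linarith

end WeightedChebyshev

section Reweighting

variable {T : Type*} [Fintype T] {R π : T → ℝ} {f : ℝ → ℝ}

lemma expFR_pos (hπ : ∀ τ, 0 ≤ π τ) (hπsum : ∑ τ, π τ = 1) (hfpos : ∀ x, 0 < f x) :
    0 < expFR f R π :=
  sum_mul_pos_of_sum_ne_zero (fun τ => hfpos (R τ)) hπ (hπsum ▸ one_ne_zero)

lemma covRFR_nonneg (hπ : ∀ τ, 0 ≤ π τ) (hπsum : ∑ τ, π τ = 1) (hf : Monotone f) :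
    0 ≤ covRFR f R π := by
  have hcheb := ((monovary_self R).comp_monotone_left hf).symm.sum_mul_mul_sum_le_sum_mul_sum hπ
  rw [hπsum, one_mul] at hcheb
  exact sub_nonneg.mpr hcheb

lemma Jexp_reweightF : Jexp R (reweightF f R π) = (∑ τ, π τ * R τ * f (R τ)) / expFR f R π := by
  simp only [Jexp, reweightF, sum_div]
  exact sum_congr rfl fun τ _ => by ring

lemma Jexp_reweightF_eq_add_covRFR_div (hE : expFR f R π ≠ 0) :
    Jexp R (reweightF f R π) = Jexp R π + covRFR f R π / expFR f R π := by
  rw [Jexp_reweightF, covRFR]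
  field_simp
  ring

end Reweighting

theorem improvement_monotone_transform_general
    {T : Type*} [Fintype T]
    (R π : T → ℝ) (f : ℝ → ℝ)
    (hπ : ∀ τ, 0 ≤ π τ) (hπsum : ∑ τ, π τ = 1)
    (hf : Monotone f) (hfpos : ∀ x, 0 < f x) :
    Jexp R (reweightF f R π) = Jexp R π + covRFR f R π / expFR f R π ∧
      0 ≤ covRFR f R π ∧
      Jexp R π ≤ Jexp R (reweightF f R π) := by
  have hE : 0 < expFR f R π := expFR_pos hπ hπsum hfpos
  have hcov : 0 ≤ covRFR f R π := covRFR_nonneg hπ hπsum hf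
  have heq := Jexp_reweightF_eq_add_covRFR_div hE.ne'
  exact ⟨heq, hcov, heq ▸ le_add_of_nonneg_right (div_nonneg hcov hE.le)⟩

/-- For monotone positive `f`: `J(f(R)π) = J(π) + Cov_π(R, f∘R) / E_π[f∘R]`,
`Cov_π(R, f∘R) ≥ 0`, and hence `J(f(R)π) ≥ J(π)`. -/
theorem improvement_monotone_transform
    {T : Type*} [Fintype T] [Nonempty T]
    (R π : T → ℝ) (f : ℝ → ℝ) (hR : ∀ τ, 0 < R τ)
    (hπ : ∀ τ, 0 ≤ π τ) (hπsum : ∑ τ, π τ = 1)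
    (hf : Monotone f) (hfpos : ∀ x, 0 < f x) :
    Jexp R (reweightF f R π) = Jexp R π + covRFR f R π / expFR f R π ∧
      0 ≤ covRFR f R π ∧
      Jexp R π ≤ Jexp R (reweightF f R π) :=
  improvement_monotone_transform_general R π f hπ hπsum hf hfpos
end

section
/- For any two strictly positive policies π and μ on T, the expected return satisfies the global lower bound J(π) ≥ J(μ) · (1 − KL(Rμ‖π) + KL(Rμ‖μ)); equivalently, J(π) ≥ J(μ) + Σ_τ R(τ) μ(τ) log(π(τ)/μ(τ)). -/
/-!
Both bounds are the same inequality. Since `J(μ) · Rμ(τ) = R(τ) μ(τ)`, the difference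
`KL(Rμ‖μ) − KL(Rμ‖π)` scaled by `J(μ)` is `∑ R μ log (π / μ)`. Termwise,
`μ log (π / μ) ≤ π − μ` by `log x ≤ x − 1`, and weighting by `R ≥ 0` and summing gives
`∑ R μ log (π / μ) ≤ J(π) − J(μ)`.
-/

open Finset

lemma mul_log_div_le_sub {x y : ℝ} (hx : 0 < x) (hy : 0 < y) : y * Real.log (x / y) ≤ x - y :=
  calc y * Real.log (x / y) ≤ y * (x / y - 1) :=
        mul_le_mul_of_nonneg_left (Real.log_le_sub_one_of_pos (div_pos hx hy)) hy.le
    _ = x - y := by field_simp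

lemma mul_log_div_sub_mul_log_div (p : ℝ) {q r : ℝ} (hq : q ≠ 0) (hr : r ≠ 0) :
    p * Real.log (p / r) - p * Real.log (p / q) = p * Real.log (q / r) := by
  rcases eq_or_ne p 0 with rfl | hp
  · simp
  rw [← mul_sub, ← Real.log_div (div_ne_zero hp hr) (div_ne_zero hp hq)]
  congr 2
  field_simp

section

variable {T : Type*} [Fintype T]

lemma klDiv_sub_klDiv (p : T → ℝ) {q r : T → ℝ} (hq : ∀ τ, q τ ≠ 0) (hr : ∀ τ, r τ ≠ 0) :
    klDiv p r - klDiv p q = ∑ τ, p τ * Real.log (q τ / r τ) := by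
  rw [klDiv, klDiv, ← sum_sub_distrib]
  exact sum_congr rfl fun τ _ ↦ mul_log_div_sub_mul_log_div (p τ) (hq τ) (hr τ)

lemma sum_mul_log_div_le_Jexp_sub {R π μ : T → ℝ} (hR : ∀ τ, 0 ≤ R τ)
    (hπ : ∀ τ, 0 < π τ) (hμ : ∀ τ, 0 < μ τ) :
    ∑ τ, R τ * μ τ * Real.log (π τ / μ τ) ≤ Jexp R π - Jexp R μ := by
  rw [Jexp, Jexp, ← sum_sub_distrib]
  refine sum_le_sum fun τ _ ↦ ?_
  rw [mul_assoc, ← mul_sub]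
  exact mul_le_mul_of_nonneg_left (mul_log_div_le_sub (hπ τ) (hμ τ)) (hR τ)

lemma Jexp_mul_impPolicy {R μ : T → ℝ} (hR : ∀ τ, 0 < R τ) (hμ : ∀ τ, 0 < μ τ) (τ : T) :
    Jexp R μ * impPolicy R μ τ = R τ * μ τ := by
  have hJ : 0 < Jexp R μ :=
    sum_pos (fun σ _ ↦ mul_pos (hR σ) (hμ σ)) ⟨τ, mem_univ τ⟩
  exact mul_div_cancel₀ _ hJ.ne'

lemma Jexp_mul_one_sub_klDiv_add_klDiv {R π μ : T → ℝ} (hR : ∀ τ, 0 < R τ)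
    (hπ : ∀ τ, 0 < π τ) (hμ : ∀ τ, 0 < μ τ) :
    Jexp R μ * (1 - klDiv (impPolicy R μ) π + klDiv (impPolicy R μ) μ) =
      Jexp R μ + ∑ τ, R τ * μ τ * Real.log (π τ / μ τ) := by
  have hkl := klDiv_sub_klDiv (impPolicy R μ) (fun τ ↦ (hπ τ).ne') (fun τ ↦ (hμ τ).ne')
  rw [sub_add_eq_add_sub, add_sub_assoc, hkl, mul_add, mul_one, mul_sum]
  simp only [← mul_assoc, Jexp_mul_impPolicy hR hμ]

end

theorem lower_bound_trajectory_general
    {T : Type*} [Fintype T]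
    (R π μ : T → ℝ) (hR : ∀ τ, 0 < R τ)
    (hπpos : ∀ τ, 0 < π τ)
    (hμpos : ∀ τ, 0 < μ τ) :
    Jexp R μ * (1 - klDiv (impPolicy R μ) π + klDiv (impPolicy R μ) μ) ≤ Jexp R π ∧
      Jexp R μ + ∑ τ, R τ * μ τ * Real.log (π τ / μ τ) ≤ Jexp R π := by
  have key := sum_mul_log_div_le_Jexp_sub (fun τ ↦ (hR τ).le) hπpos hμpos
  rw [Jexp_mul_one_sub_klDiv_add_klDiv hR hπpos hμpos]
  constructor <;> linarith

/-- Global lower bound: for strictly positive policies `π` and `μ`,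
`J(π) ≥ J(μ) * (1 − KL(Rμ‖π) + KL(Rμ‖μ))`, equivalently
`J(π) ≥ J(μ) + ∑ τ, R τ * μ τ * log (π τ / μ τ)`. -/
theorem lower_bound_trajectory
    {T : Type*} [Fintype T] [Nonempty T]
    (R π μ : T → ℝ) (hR : ∀ τ, 0 < R τ)
    (hπpos : ∀ τ, 0 < π τ) (hπsum : ∑ τ, π τ = 1)
    (hμpos : ∀ τ, 0 < μ τ) (hμsum : ∑ τ, μ τ = 1) :
    Jexp R μ * (1 - klDiv (impPolicy R μ) π + klDiv (impPolicy R μ) μ) ≤ Jexp R π ∧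
      Jexp R μ + ∑ τ, R τ * μ τ * Real.log (π τ / μ τ) ≤ Jexp R π :=
  lower_bound_trajectory_general R π μ hR hπpos hμpos
end

section
/- Let π and μ be policies with π(a|s) > 0 and μ(a|s) > 0 for all s ∈ S, a ∈ A. Then the expected return satisfies the global lower bound J(π) ≥ J(μ) + Σ_s d^μ(s) Σ_a Q^μ(s,a) μ(a|s) log(π(a|s)/μ(a|s)). -/
/-!
Let `X_k`, `Y_k` be the state distributions at step `k` under `π` and `μ`, and let `Z_k(s)`
(`vecMulPowDeriv`) be the `μ`-expectation of the accumulated log-likelihood ratio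
`∑_{i<k} log (π/μ)(s_i, a_i)` on the event `s_k = s`. Jensen's inequality, in the form of the
log-sum inequality, propagates `Z_k ≤ Y_k log (X_k / Y_k)` from step to step; i.e. `(X_k, Y_k, Z_k)`
stays in the exponential cone. Together with `y (1 + log (x / y)) ≤ x` this gives for every `k`
`E_π[r_k] ≥ E_μ[r_k] + E_μ[r_k ∑_{i≤k} log (π/μ)(s_i, a_i)]`. Weighting by `γ^k` and summing, the
last term becomes a Cauchy product of `d^μ` with `V^μ`, which is the `Q^μ`-weighted sum in the
statement.
-/

/-- Induced state-transition matrix `M_π(s,s') = ∑ a, π(a|s) p(s'|s,a)`. -/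
noncomputable def transMat {S A : Type*} [Fintype S] [Fintype A]
    (p : S → A → S → ℝ) (π : S → A → ℝ) : Matrix S S ℝ :=
  Matrix.of fun s s' => ∑ a, π s a * p s a s'

/-- Expected one-step reward `r_π(s) = ∑ a, π(a|s) r(s,a)`. -/
noncomputable def rPol {S A : Type*} [Fintype A]
    (r : S → A → ℝ) (π : S → A → ℝ) (s : S) : ℝ :=
  ∑ a, π s a * r s a

/-- Value function `V^π(s) = ∑_{k} γ^k (M_π^k r_π)(s)`. -/
noncomputable def Vpi {S A : Type*} [Fintype S] [Fintype A] [DecidableEq S]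
    (p : S → A → S → ℝ) (r : S → A → ℝ) (γ : ℝ) (π : S → A → ℝ) (s : S) : ℝ :=
  ∑' k : ℕ, γ ^ k * ((transMat p π ^ k).mulVec (rPol r π)) s

/-- Action-value function `Q^π(s,a) = r(s,a) + γ ∑_{s'} p(s'|s,a) V^π(s')`. -/
noncomputable def Qpi {S A : Type*} [Fintype S] [Fintype A] [DecidableEq S]
    (p : S → A → S → ℝ) (r : S → A → ℝ) (γ : ℝ) (π : S → A → ℝ) (s : S) (a : A) : ℝ :=
  r s a + γ * ∑ s', p s a s' * Vpi p r γ π s'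

/-- Discounted state distribution `d^π(s) = ∑_{t} γ^t (d₀ᵀ M_π^t)(s)`. -/
noncomputable def dPi {S A : Type*} [Fintype S] [Fintype A] [DecidableEq S]
    (p : S → A → S → ℝ) (d₀ : S → ℝ) (γ : ℝ) (π : S → A → ℝ) (s : S) : ℝ :=
  ∑' t : ℕ, γ ^ t * Matrix.vecMul d₀ (transMat p π ^ t) s

/-- Expected return `J(π) = ∑ s, d₀(s) V^π(s)`. -/
noncomputable def Jpi {S A : Type*} [Fintype S] [Fintype A] [DecidableEq S]
    (p : S → A → S → ℝ) (r : S → A → ℝ) (d₀ : S → ℝ) (γ : ℝ) (π : S → A → ℝ) : ℝ :=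
  ∑ s, d₀ s * Vpi p r γ π s

open Finset Matrix
open Real (log log_mul log_le_sub_one_of_pos)

/-- Membership of `(x, y, z)` in the exponential cone `closure {y > 0, y * exp (z / y) ≤ x}`,
written with `log` so that the boundary `y = 0` needs no separate formula. -/
structure InExpCone (x y z : ℝ) : Prop where
  nonneg_left : 0 ≤ x
  nonneg_mid : 0 ≤ y
  pos_of_pos : 0 < y → 0 < x
  le_mul_log : z ≤ y * log (x / y)

namespace InExpCone

variable {x y z : ℝ}

theorem self (hx : 0 ≤ x) : InExpCone x x 0 where
  nonneg_left := hx
  nonneg_mid := hx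
  pos_of_pos := id
  le_mul_log := by
    rcases hx.eq_or_lt with rfl | hx
    · simp
    · simp [div_self hx.ne']

theorem le_mul_log_add_div_sub (h : InExpCone x y z) {c : ℝ} (hc : 0 < c) :
    z ≤ y * log c + x / c - y := by
  rcases h.nonneg_mid.eq_or_lt with rfl | hy
  · simpa using h.le_mul_log.trans_eq (zero_mul _) |>.trans (div_nonneg h.nonneg_left hc.le)
  have hx := h.pos_of_pos hy
  have hsplit : log (x / y) = log c + log (x / (c * y)) := by
    rw [← log_mul hc.ne' (by positivity)]; congr 1; field_simp
  calc z ≤ y * log (x / y) := h.le_mul_log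
    _ = y * log c + y * log (x / (c * y)) := by rw [hsplit, mul_add]
    _ ≤ y * log c + y * (x / (c * y) - 1) := by
        gcongr; exact log_le_sub_one_of_pos (by positivity)
    _ = y * log c + x / c - y := by field_simp; ring

theorem add_le (h : InExpCone x y z) : y + z ≤ x := by
  linarith [show z ≤ x - y by simpa using h.le_mul_log_add_div_sub one_pos]

theorem mul (h : InExpCone x y z) {c : ℝ} (hc : 0 ≤ c) : InExpCone (x * c) (y * c) (z * c) where
  nonneg_left := mul_nonneg h.nonneg_left hc
  nonneg_mid := mul_nonneg h.nonneg_mid hc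
  pos_of_pos hyc :=
    mul_pos (h.pos_of_pos (pos_of_mul_pos_left hyc hc)) (pos_of_mul_pos_right hyc h.nonneg_mid)
  le_mul_log := by
    rcases hc.eq_or_lt with rfl | hc
    · simp
    rw [mul_div_mul_right _ _ hc.ne', mul_right_comm]
    exact mul_le_mul_of_nonneg_right h.le_mul_log hc.le

/-- The log-sum inequality. -/
theorem sum {ι : Type*} {s : Finset ι} {x y z : ι → ℝ}
    (h : ∀ i ∈ s, InExpCone (x i) (y i) (z i)) :
    InExpCone (∑ i ∈ s, x i) (∑ i ∈ s, y i) (∑ i ∈ s, z i) := by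
  have hx : 0 ≤ ∑ i ∈ s, x i := sum_nonneg fun i hi => (h i hi).nonneg_left
  have hy : 0 ≤ ∑ i ∈ s, y i := sum_nonneg fun i hi => (h i hi).nonneg_mid
  have hpos : 0 < ∑ i ∈ s, y i → 0 < ∑ i ∈ s, x i := fun hY => by
    obtain ⟨i, hi, hyi⟩ := exists_lt_of_sum_lt (f := fun _ => (0 : ℝ)) (by simpa using hY)
    exact Finset.sum_pos' (fun j hj => (h j hj).nonneg_left) ⟨i, hi, (h i hi).pos_of_pos hyi⟩
  refine ⟨hx, hy, hpos, ?_⟩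
  rcases hy.eq_or_lt with hY | hY
  · rw [← hY, zero_mul]
    refine sum_nonpos fun i hi => ?_
    have hyi : y i = 0 :=
      (sum_eq_zero_iff_of_nonneg fun j hj => (h j hj).nonneg_mid).1 hY.symm i hi
    simpa [hyi] using (h i hi).le_mul_log
  have hX := hpos hY
  calc ∑ i ∈ s, z i
      ≤ ∑ i ∈ s, (y i * log ((∑ i ∈ s, x i) / ∑ i ∈ s, y i)
          + x i / ((∑ i ∈ s, x i) / ∑ i ∈ s, y i) - y i) :=
        sum_le_sum fun i hi => (h i hi).le_mul_log_add_div_sub (by positivity)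
    _ = (∑ i ∈ s, y i) * log ((∑ i ∈ s, x i) / ∑ i ∈ s, y i) := by
        rw [sum_sub_distrib, sum_add_distrib, ← sum_mul, ← sum_div]; field_simp; ring

theorem mul_log_div (h : InExpCone x y z) {a b : ℝ} (ha : 0 < a) (hb : 0 < b) :
    InExpCone (x * a) (y * b) (y * (b * log (a / b)) + z * b) where
  nonneg_left := mul_nonneg h.nonneg_left ha.le
  nonneg_mid := mul_nonneg h.nonneg_mid hb.le
  pos_of_pos hyb := mul_pos (h.pos_of_pos (pos_of_mul_pos_left hyb hb.le)) ha
  le_mul_log := by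
    rcases h.nonneg_mid.eq_or_lt with rfl | hy
    · simpa using mul_le_mul_of_nonneg_right (h.le_mul_log.trans_eq (zero_mul _)) hb.le
    have hx := h.pos_of_pos hy
    have hsplit : log (x * a / (y * b)) = log (x / y) + log (a / b) := by
      rw [← log_mul (by positivity) (by positivity), div_mul_div_comm]
    rw [hsplit]
    nlinarith [mul_le_mul_of_nonneg_right h.le_mul_log hb.le]

theorem vecMul {ι κ : Type*} [Fintype ι] {x y z : ι → ℝ}
    (h : ∀ i, InExpCone (x i) (y i) (z i)) {K : Matrix ι κ ℝ} (hK : ∀ i j, 0 ≤ K i j) (j : κ) :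
    InExpCone ((x ᵥ* K) j) ((y ᵥ* K) j) ((z ᵥ* K) j) :=
  InExpCone.sum fun i _ => (h i).mul (hK i j)

end InExpCone

section MDP

variable {S A : Type*}

def occupancy (w : S → ℝ) (π : S → A → ℝ) : S × A → ℝ := fun q => w q.1 * π q.1 q.2

noncomputable def weightedLogRatio (π μ : S → A → ℝ) : S → A → ℝ :=
  fun s a => μ s a * log (π s a / μ s a)

theorem inExpCone_occupancy {x y z : S → ℝ} (h : ∀ s, InExpCone (x s) (y s) (z s))
    {π μ : S → A → ℝ} (hπ : ∀ s a, 0 < π s a) (hμ : ∀ s a, 0 < μ s a) (q : S × A) :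
    InExpCone (occupancy x π q) (occupancy y μ q)
      ((occupancy y (weightedLogRatio π μ) + occupancy z μ) q) :=
  (h q.1).mul_log_div (hπ q.1 q.2) (hμ q.1 q.2)

variable [Fintype S] [Fintype A]

def stateActionKernel (p : S → A → S → ℝ) : Matrix (S × A) S ℝ :=
  Matrix.of fun q s' => p q.1 q.2 s'

theorem occupancy_vecMul_stateActionKernel (w : S → ℝ) (π : S → A → ℝ) (p : S → A → S → ℝ) :
    occupancy w π ᵥ* stateActionKernel p = w ᵥ* transMat p π := by
  ext s'
  simp only [vecMul, dotProduct, occupancy, stateActionKernel, transMat, of_apply,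
    Fintype.sum_prod_type, mul_sum, mul_assoc]

theorem occupancy_dotProduct_uncurry (w : S → ℝ) (π : S → A → ℝ) (r : S → A → ℝ) :
    occupancy w π ⬝ᵥ Function.uncurry r = w ⬝ᵥ rPol r π := by
  simp only [dotProduct, occupancy, rPol, Function.uncurry, Fintype.sum_prod_type, mul_sum,
    mul_assoc]

variable [DecidableEq S]

theorem transMat_mem_rowStochastic {p : S → A → S → ℝ} {π : S → A → ℝ}
    (hp0 : ∀ s a s', 0 ≤ p s a s') (hp1 : ∀ s a, ∑ s', p s a s' = 1)
    (hπ0 : ∀ s a, 0 ≤ π s a) (hπ1 : ∀ s, ∑ a, π s a = 1) :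
    transMat p π ∈ rowStochastic ℝ S := by
  refine mem_rowStochastic_iff_sum.2
    ⟨fun s s' => sum_nonneg fun a _ => mul_nonneg (hπ0 s a) (hp0 s a s'), fun s => ?_⟩
  simp only [transMat, of_apply]
  rw [sum_comm]
  simp [← mul_sum, hp1, hπ1]

theorem sum_Qpi_mul (p : S → A → S → ℝ) (r : S → A → ℝ) (γ : ℝ)
    (μ w : S → A → ℝ) (s : S) :
    ∑ a, Qpi p r γ μ s a * w s a = rPol r w s + γ * (transMat p w *ᵥ Vpi p r γ μ) s := by
  simp only [Qpi, rPol, mulVec, dotProduct, transMat, of_apply, sum_mul, mul_sum, add_mul,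
    sum_add_distrib]
  rw [sum_comm]
  congr 1 <;> refine sum_congr rfl fun _ _ => ?_
  · ring
  · refine sum_congr rfl fun _ _ => ?_
    ring

theorem sum_mul_sum_Qpi_mul (p : S → A → S → ℝ) (r : S → A → ℝ) (γ : ℝ)
    (μ w : S → A → ℝ) (D : S → ℝ) :
    ∑ s, D s * ∑ a, Qpi p r γ μ s a * w s a
      = D ⬝ᵥ rPol r w + γ * (D ⬝ᵥ (transMat p w *ᵥ Vpi p r γ μ)) := by
  simp only [sum_Qpi_mul, dotProduct, mul_add, sum_add_distrib, mul_sum, mul_left_comm]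

/-- The derivative at `ε = 0` of `ε ↦ d₀ ᵥ* (M + ε • N) ^ k`. -/
def vecMulPowDeriv (d₀ : S → ℝ) (M N : Matrix S S ℝ) : ℕ → S → ℝ
  | 0 => 0
  | k + 1 => (d₀ ᵥ* M ^ k) ᵥ* N + vecMulPowDeriv d₀ M N k ᵥ* M

variable {p : S → A → S → ℝ} {π μ : S → A → ℝ} {d₀ : S → ℝ}

theorem inExpCone_vecMulPowDeriv (hp : ∀ s a s', 0 ≤ p s a s') (hπ : ∀ s a, 0 < π s a)
    (hμ : ∀ s a, 0 < μ s a) (hd₀ : ∀ s, 0 ≤ d₀ s) (k : ℕ) (s : S) :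
    InExpCone ((d₀ ᵥ* transMat p π ^ k) s) ((d₀ ᵥ* transMat p μ ^ k) s)
      (vecMulPowDeriv d₀ (transMat p μ) (transMat p (weightedLogRatio π μ)) k s) := by
  induction k generalizing s with
  | zero => simpa [vecMulPowDeriv] using InExpCone.self (hd₀ s)
  | succ k ih =>
    have := InExpCone.vecMul (inExpCone_occupancy ih hπ hμ) (K := stateActionKernel p)
      (fun q s' => hp q.1 q.2 s') s
    simpa only [add_vecMul, occupancy_vecMul_stateActionKernel, vecMul_vecMul, ← pow_succ,
      vecMulPowDeriv] using this

theorem dotProduct_rPol_add_le (hp : ∀ s a s', 0 ≤ p s a s') (hπ : ∀ s a, 0 < π s a)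
    (hμ : ∀ s a, 0 < μ s a) (hd₀ : ∀ s, 0 ≤ d₀ s) {r : S → A → ℝ} (hr : ∀ s a, 0 ≤ r s a)
    (k : ℕ) :
    (d₀ ᵥ* transMat p μ ^ k) ⬝ᵥ rPol r μ
        + ((d₀ ᵥ* transMat p μ ^ k) ⬝ᵥ rPol r (weightedLogRatio π μ)
          + vecMulPowDeriv d₀ (transMat p μ) (transMat p (weightedLogRatio π μ)) k ⬝ᵥ rPol r μ)
      ≤ (d₀ ᵥ* transMat p π ^ k) ⬝ᵥ rPol r π := by
  simp only [← occupancy_dotProduct_uncurry, ← add_dotProduct]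
  exact dotProduct_le_dotProduct_of_nonneg_right
    (fun q => (inExpCone_occupancy (inExpCone_vecMulPowDeriv hp hπ hμ hd₀ k) hπ hμ q).add_le)
    (fun q => hr q.1 q.2)

end MDP

section DiscountedSums

variable {γ : ℝ}

theorem summable_norm_pow_mul_of_abs_le (hγ : |γ| < 1) {f : ℕ → ℝ} {C : ℝ}
    (hf : ∀ k, |f k| ≤ C) : Summable fun k => ‖γ ^ k * f k‖ := by
  refine .of_nonneg_of_le (fun _ => norm_nonneg _) (fun k => ?_)
    ((summable_geometric_of_lt_one (abs_nonneg γ) hγ).mul_right C)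
  rw [Real.norm_eq_abs, abs_mul, abs_pow]
  exact mul_le_mul_of_nonneg_left (hf k) (by positivity)

theorem abs_mulVec_apply_le {ι κ : Type*} [Fintype κ] (N : Matrix ι κ ℝ) {v : κ → ℝ} {c : ℝ}
    (hv : ∀ t, |v t| ≤ c) (s : ι) : |(N *ᵥ v) s| ≤ (∑ t, |N s t|) * c := by
  rw [sum_mul]
  refine (abs_sum_le_sum_abs _ _).trans (sum_le_sum fun t _ => ?_)
  rw [abs_mul]
  exact mul_le_mul_of_nonneg_left (hv t) (abs_nonneg _)

variable {S : Type*} [Fintype S]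

theorem hasSum_mul_dotProduct {c : ℕ → ℝ} {f : ℕ → S → ℝ} {D : S → ℝ}
    (h : ∀ s, HasSum (fun k => c k * f k s) (D s)) (w : S → ℝ) :
    HasSum (fun k => c k * (w ⬝ᵥ f k)) (w ⬝ᵥ D) := by
  simpa only [dotProduct, mul_sum, mul_left_comm] using
    hasSum_sum fun s _ => (h s).mul_left (w s)

variable [DecidableEq S] {M : Matrix S S ℝ}

theorem abs_mulVec_apply_le_of_mem_rowStochastic (hM : M ∈ rowStochastic ℝ S) (v : S → ℝ)
    (s : S) : |(M *ᵥ v) s| ≤ ‖v‖ := by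
  simpa [abs_of_nonneg (nonneg_of_mem_rowStochastic hM), sum_row_of_mem_rowStochastic hM]
    using abs_mulVec_apply_le M
      (fun t => (Real.norm_eq_abs _).symm.trans_le (norm_le_pi_norm v t)) s

theorem abs_vecMul_apply_le_of_mem_rowStochastic (hM : M ∈ rowStochastic ℝ S) (u : S → ℝ)
    (t : S) : |(u ᵥ* M) t| ≤ ∑ s, |u s| := by
  refine (abs_sum_le_sum_abs _ _).trans (sum_le_sum fun s _ => ?_)
  rw [abs_mul, abs_of_nonneg (nonneg_of_mem_rowStochastic hM)]
  exact mul_le_of_le_one_right (abs_nonneg _) (le_one_of_mem_rowStochastic hM)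

theorem vecMulPowDeriv_succ_dotProduct (d₀ : S → ℝ) (M N : Matrix S S ℝ) (n : ℕ) (w : S → ℝ) :
    vecMulPowDeriv d₀ M N (n + 1) ⬝ᵥ w
      = ∑ ij ∈ antidiagonal n, (d₀ ᵥ* M ^ ij.1) ⬝ᵥ (N *ᵥ (M ^ ij.2 *ᵥ w)) := by
  induction n generalizing w with
  | zero => simp [vecMulPowDeriv, dotProduct_mulVec]
  | succ n ih =>
    rw [Nat.sum_antidiagonal_succ', vecMulPowDeriv, add_dotProduct, ← dotProduct_mulVec _ N,
      ← dotProduct_mulVec _ M, ih]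
    simp [pow_succ, ← mulVec_mulVec]

theorem hasSum_vecMulPowDeriv_dotProduct (hM : M ∈ rowStochastic ℝ S) (hγ : |γ| < 1)
    (d₀ : S → ℝ) (N : Matrix S S ℝ) (w : S → ℝ) {D V : S → ℝ}
    (hD : ∀ s, HasSum (fun k => γ ^ k * (d₀ ᵥ* M ^ k) s) (D s))
    (hV : ∀ s, HasSum (fun k => γ ^ k * (M ^ k *ᵥ w) s) (V s)) :
    HasSum (fun k => γ ^ k * (vecMulPowDeriv d₀ M N k ⬝ᵥ w)) (γ * (D ⬝ᵥ (N *ᵥ V))) := by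
  have hNV (s : S) : HasSum (fun k => γ ^ k * (N *ᵥ (M ^ k *ᵥ w)) s) ((N *ᵥ V) s) := by
    simpa only [mulVec] using hasSum_mul_dotProduct hV (N s)
  have hprod (s : S) : HasSum (fun n => ∑ ij ∈ antidiagonal n,
      γ ^ ij.1 * (d₀ ᵥ* M ^ ij.1) s * (γ ^ ij.2 * (N *ᵥ (M ^ ij.2 *ᵥ w)) s))
      (D s * (N *ᵥ V) s) := by
    have ha := summable_norm_pow_mul_of_abs_le hγ fun k =>
      abs_vecMul_apply_le_of_mem_rowStochastic (pow_mem hM k) d₀ s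
    have hb := summable_norm_pow_mul_of_abs_le hγ fun k =>
      abs_mulVec_apply_le N (abs_mulVec_apply_le_of_mem_rowStochastic (pow_mem hM k) w) s
    rw [← (hD s).tsum_eq, ← (hNV s).tsum_eq,
      tsum_mul_tsum_eq_tsum_sum_antidiagonal_of_summable_norm ha hb]
    exact (summable_sum_mul_antidiagonal_of_summable_norm' ha ha.of_norm hb hb.of_norm).hasSum
  have hterm (n : ℕ) : γ ^ (n + 1) * (vecMulPowDeriv d₀ M N (n + 1) ⬝ᵥ w)
      = γ * ∑ s,
        ∑ ij ∈ antidiagonal n,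
          γ ^ ij.1 * (d₀ ᵥ* M ^ ij.1) s * (γ ^ ij.2 * (N *ᵥ (M ^ ij.2 *ᵥ w)) s) := by
    rw [vecMulPowDeriv_succ_dotProduct, sum_comm, mul_sum, mul_sum]
    refine sum_congr rfl fun ij hij => ?_
    rw [dotProduct, mul_sum, mul_sum, ← mem_antidiagonal.1 hij, pow_succ, pow_add]
    exact sum_congr rfl fun s _ => by ring
  refine (hasSum_nat_add_iff' 1).1 ?_
  have hzero : vecMulPowDeriv d₀ M N 0 = 0 := rfl
  rw [sum_range_one, hzero, zero_dotProduct, mul_zero, sub_zero]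
  simp only [hterm]
  exact (hasSum_sum fun s _ => hprod s).mul_left γ

end DiscountedSums

section MDPSums

variable {S A : Type*} [Fintype S] [Fintype A] [DecidableEq S] {p : S → A → S → ℝ}
  {r : S → A → ℝ} {d₀ : S → ℝ} {γ : ℝ} {π : S → A → ℝ}

theorem hasSum_Vpi (hM : transMat p π ∈ rowStochastic ℝ S) (hγ : |γ| < 1) (s : S) :
    HasSum (fun k => γ ^ k * (transMat p π ^ k *ᵥ rPol r π) s) (Vpi p r γ π s) :=
  (summable_norm_pow_mul_of_abs_le hγ fun k =>
    abs_mulVec_apply_le_of_mem_rowStochastic (pow_mem hM k) _ s).of_norm.hasSum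

theorem hasSum_dPi (hM : transMat p π ∈ rowStochastic ℝ S) (hγ : |γ| < 1) (s : S) :
    HasSum (fun k => γ ^ k * (d₀ ᵥ* transMat p π ^ k) s) (dPi p d₀ γ π s) :=
  (summable_norm_pow_mul_of_abs_le hγ fun k =>
    abs_vecMul_apply_le_of_mem_rowStochastic (pow_mem hM k) d₀ s).of_norm.hasSum

theorem hasSum_Jpi (hM : transMat p π ∈ rowStochastic ℝ S) (hγ : |γ| < 1) :
    HasSum (fun k => γ ^ k * ((d₀ ᵥ* transMat p π ^ k) ⬝ᵥ rPol r π)) (Jpi p r d₀ γ π) := by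
  have h := hasSum_mul_dotProduct (hasSum_Vpi (r := r) hM hγ) d₀
  simp only [dotProduct_mulVec] at h
  exact h

theorem hasSum_dPi_dotProduct (hM : transMat p π ∈ rowStochastic ℝ S) (hγ : |γ| < 1)
    (w : S → ℝ) :
    HasSum (fun k => γ ^ k * ((d₀ ᵥ* transMat p π ^ k) ⬝ᵥ w)) (dPi p d₀ γ π ⬝ᵥ w) := by
  simpa only [dotProduct_comm w] using hasSum_mul_dotProduct (hasSum_dPi (d₀ := d₀) hM hγ) w

end MDPSums

theorem lower_bound_state_action_general
    {S A : Type*} [Fintype S] [Fintype A] [DecidableEq S]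
    (p : S → A → S → ℝ) (hp0 : ∀ s a s', 0 ≤ p s a s') (hp1 : ∀ s a, ∑ s', p s a s' = 1)
    (r : S → A → ℝ) (hr : ∀ s a, 0 < r s a)
    (d₀ : S → ℝ) (hd₀ : ∀ s, 0 ≤ d₀ s)
    (γ : ℝ) (hγ0 : 0 ≤ γ) (hγ1 : γ < 1)
    (π μ : S → A → ℝ)
    (hπpos : ∀ s a, 0 < π s a) (hπsum : ∀ s, ∑ a, π s a = 1)
    (hμpos : ∀ s a, 0 < μ s a) (hμsum : ∀ s, ∑ a, μ s a = 1) :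
    Jpi p r d₀ γ μ +
        ∑ s, dPi p d₀ γ μ s * ∑ a, Qpi p r γ μ s a * μ s a * Real.log (π s a / μ s a)
      ≤ Jpi p r d₀ γ π := by
  have hγ : |γ| < 1 := abs_lt.2 ⟨by linarith, hγ1⟩
  have hMπ := transMat_mem_rowStochastic hp0 hp1 (fun s a => (hπpos s a).le) hπsum
  have hMμ := transMat_mem_rowStochastic hp0 hp1 (fun s a => (hμpos s a).le) hμsum
  have hgain : ∑ s, dPi p d₀ γ μ s * ∑ a, Qpi p r γ μ s a * μ s a * Real.log (π s a / μ s a)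
      = dPi p d₀ γ μ ⬝ᵥ rPol r (weightedLogRatio π μ)
        + γ * (dPi p d₀ γ μ ⬝ᵥ (transMat p (weightedLogRatio π μ) *ᵥ Vpi p r γ μ)) := by
    simpa only [mul_assoc, weightedLogRatio] using
      sum_mul_sum_Qpi_mul p r γ μ (weightedLogRatio π μ) (dPi p d₀ γ μ)
  rw [hgain]
  refine hasSum_le (fun k => ?_)
    ((hasSum_Jpi hMμ hγ).add ((hasSum_dPi_dotProduct hMμ hγ _).add
      (hasSum_vecMulPowDeriv_dotProduct hMμ hγ d₀ _ _ (hasSum_dPi hMμ hγ) (hasSum_Vpi hMμ hγ))))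
    (hasSum_Jpi hMπ hγ)
  simpa only [mul_add] using mul_le_mul_of_nonneg_left
    (dotProduct_rPol_add_le hp0 hπpos hμpos hd₀ (fun s a => (hr s a).le) k) (pow_nonneg hγ0 k)

/-- Global lower bound in the state-action formulation:
`J(π) ≥ J(μ) + ∑ s, d^μ(s) ∑ a, Q^μ(s,a) μ(a|s) log (π(a|s) / μ(a|s))`. -/
theorem lower_bound_state_action
    {S A : Type*} [Fintype S] [Fintype A] [DecidableEq S] [Nonempty S] [Nonempty A]
    (p : S → A → S → ℝ) (hp0 : ∀ s a s', 0 ≤ p s a s') (hp1 : ∀ s a, ∑ s', p s a s' = 1)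
    (r : S → A → ℝ) (hr : ∀ s a, 0 < r s a)
    (d₀ : S → ℝ) (hd₀ : ∀ s, 0 ≤ d₀ s) (hd₀sum : ∑ s, d₀ s = 1)
    (γ : ℝ) (hγ0 : 0 ≤ γ) (hγ1 : γ < 1)
    (π μ : S → A → ℝ)
    (hπpos : ∀ s a, 0 < π s a) (hπsum : ∀ s, ∑ a, π s a = 1)
    (hμpos : ∀ s a, 0 < μ s a) (hμsum : ∀ s, ∑ a, μ s a = 1) :
    Jpi p r d₀ γ μ +
        ∑ s, dPi p d₀ γ μ s * ∑ a, Qpi p r γ μ s a * μ s a * Real.log (π s a / μ s a)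
      ≤ Jpi p r d₀ γ π :=
  lower_bound_state_action_general p hp0 hp1 r hr d₀ hd₀ γ hγ0 hγ1 π μ hπpos hπsum hμpos hμsum
end

section
/- For any horizon H ∈ ℕ and any policies π, μ with π(a|s) > 0 and μ(a|s) > 0 for all s ∈ S, a ∈ A, the surrogate objective J_μ(π) = Σ_{h=0}^{H} γ^h Σ_τ r(s_h, a_h) · (1 + log(π_h(τ)/μ_h(τ))) · μ(τ), where the sum over τ runs over all trajectories of length H+1, is a lower bound on the finite-horizon expected return: J_μ(π) ≤ J_H(π). -/
/-- Prefix probability `π_h(τ)` of a trajectory `τ = ((s₀,a₀),…,(s_H,a_H))`: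
`π_h(τ) = d₀(s₀) π(a₀|s₀) ∏_{j<h} p(s_{j+1}|s_j,a_j) π(a_{j+1}|s_{j+1})`. -/
noncomputable def prefixProb {S A : Type*} [Fintype A]
    (p : S → A → S → ℝ) (d₀ : S → ℝ) (π : S → A → ℝ)
    (H : ℕ) (h : ℕ) (τ : Fin (H + 1) → S × A) : ℝ :=
  d₀ (τ 0).1 * π (τ 0).1 (τ 0).2 *
    ∏ j ∈ Finset.univ.filter (fun j : Fin H => (j : ℕ) < h),
      (p (τ j.castSucc).1 (τ j.castSucc).2 (τ j.succ).1 * π (τ j.succ).1 (τ j.succ).2)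

/-- Full trajectory probability `π(τ) = π_H(τ)`. -/
noncomputable def trajProb {S A : Type*} [Fintype A]
    (p : S → A → S → ℝ) (d₀ : S → ℝ) (π : S → A → ℝ)
    (H : ℕ) (τ : Fin (H + 1) → S × A) : ℝ :=
  prefixProb p d₀ π H H τ

/-- Finite-horizon expected return `J_H(π) = ∑_{h=0}^{H} γ^h ∑_τ r(s_h,a_h) π(τ)`. -/
noncomputable def Jhor {S A : Type*} [Fintype S] [Fintype A] [DecidableEq S] [DecidableEq A]
    (p : S → A → S → ℝ) (r : S → A → ℝ) (d₀ : S → ℝ) (γ : ℝ)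
    (H : ℕ) (π : S → A → ℝ) : ℝ :=
  ∑ h : Fin (H + 1), γ ^ (h : ℕ) *
    ∑ τ : Fin (H + 1) → S × A, r (τ h).1 (τ h).2 * trajProb p d₀ π H τ

/-- Surrogate objective
`J_μ(π) = ∑_{h=0}^{H} γ^h ∑_τ r(s_h,a_h) (1 + log (π_h(τ)/μ_h(τ))) μ(τ)`. -/
noncomputable def Jsur {S A : Type*} [Fintype S] [Fintype A] [DecidableEq S] [DecidableEq A]
    (p : S → A → S → ℝ) (r : S → A → ℝ) (d₀ : S → ℝ) (γ : ℝ)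
    (H : ℕ) (μ π : S → A → ℝ) : ℝ :=
  ∑ h : Fin (H + 1), γ ^ (h : ℕ) *
    ∑ τ : Fin (H + 1) → S × A, r (τ h).1 (τ h).2 *
      (1 + Real.log (prefixProb p d₀ π H (h : ℕ) τ / prefixProb p d₀ μ H (h : ℕ) τ)) *
      trajProb p d₀ μ H τ

open Finset

section Aux
variable {S A : Type*} [Fintype S] [Fintype A]

lemma prefixProb_congr (p : S → A → S → ℝ) (d₀ : S → ℝ) (ν : S → A → ℝ)
    (H h : ℕ) (τ τ' : Fin (H+1) → S × A)
    (hττ' : ∀ i : Fin (H+1), (i : ℕ) ≤ h → τ i = τ' i) :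
    prefixProb p d₀ ν H h τ = prefixProb p d₀ ν H h τ' := by
  unfold prefixProb
  rw [hττ' 0 (by simp)]
  congr 1
  refine Finset.prod_congr rfl fun j hj => ?_
  simp only [mem_filter] at hj
  rw [hττ' j.castSucc (by simp; omega), hττ' j.succ (by simp; omega)]

lemma prefixProb_succ (p : S → A → S → ℝ) (d₀ : S → ℝ) (ν : S → A → ℝ)
    (H k : ℕ) (hk : k < H) (τ : Fin (H+1) → S × A) :
    prefixProb p d₀ ν H (k+1) τ = prefixProb p d₀ ν H k τ *
      (p (τ ⟨k, by omega⟩).1 (τ ⟨k, by omega⟩).2 (τ ⟨k+1, by omega⟩).1 *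
        ν (τ ⟨k+1, by omega⟩).1 (τ ⟨k+1, by omega⟩).2) := by
  unfold prefixProb
  rw [show (univ.filter (fun j : Fin H => (j:ℕ) < k+1))
      = insert (⟨k, hk⟩ : Fin H) (univ.filter fun j : Fin H => (j:ℕ) < k) by
    ext j; simp [Fin.ext_iff]; omega]
  rw [Finset.prod_insert (by simp)]
  have h1 : (⟨k, hk⟩ : Fin H).castSucc = (⟨k, by omega⟩ : Fin (H+1)) := rfl
  have h2 : (⟨k, hk⟩ : Fin H).succ = (⟨k+1, by omega⟩ : Fin (H+1)) := rfl
  rw [h1, h2]; ring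

lemma prefixProb_nonneg (p : S → A → S → ℝ) (hp0 : ∀ s a s', 0 ≤ p s a s')
    (d₀ : S → ℝ) (hd₀ : ∀ s, 0 ≤ d₀ s) (ν : S → A → ℝ) (hν : ∀ s a, 0 ≤ ν s a)
    (H h : ℕ) (τ : Fin (H+1) → S × A) : 0 ≤ prefixProb p d₀ ν H h τ :=
  mul_nonneg (mul_nonneg (hd₀ _) (hν _ _))
    (Finset.prod_nonneg fun j _ => mul_nonneg (hp0 _ _ _) (hν _ _))

lemma prefixProb_pos_of_ne (p : S → A → S → ℝ) (hp0 : ∀ s a s', 0 ≤ p s a s')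
    (d₀ : S → ℝ) (hd₀ : ∀ s, 0 ≤ d₀ s) (μ : S → A → ℝ)
    (ν : S → A → ℝ) (hν : ∀ s a, 0 < ν s a)
    (H h : ℕ) (τ : Fin (H+1) → S × A)
    (hne : prefixProb p d₀ μ H H τ ≠ 0) : 0 < prefixProb p d₀ ν H h τ := by
  have hd : d₀ (τ 0).1 ≠ 0 := by
    intro h0; exact hne (by unfold prefixProb; rw [h0]; ring)
  have hp : ∀ j : Fin H, p (τ j.castSucc).1 (τ j.castSucc).2 (τ j.succ).1 ≠ 0 := by
    intro j h0
    refine hne ?_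
    unfold prefixProb
    rw [Finset.prod_eq_zero (i := j) (by simp [j.isLt]) (by rw [h0]; ring), mul_zero]
  exact mul_pos (mul_pos ((hd₀ _).lt_of_ne (Ne.symm hd)) (hν _ _))
    (Finset.prod_pos fun j _ => mul_pos ((hp0 _ _ _).lt_of_ne (Ne.symm (hp j))) (hν _ _))

lemma prefixProb_zero_trans (p : S → A → S → ℝ) (d₀ : S → ℝ)
    (μ ν : S → A → ℝ) (hμ : ∀ s a, μ s a ≠ 0)
    (H h : ℕ) (τ : Fin (H+1) → S × A)
    (h0 : prefixProb p d₀ μ H h τ = 0) : prefixProb p d₀ ν H h τ = 0 := by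
  unfold prefixProb at h0 ⊢
  rcases mul_eq_zero.mp h0 with h1 | h2
  · rcases mul_eq_zero.mp h1 with h3 | h4
    · rw [h3]; ring
    · exact absurd h4 (hμ _ _)
  · rcases Finset.prod_eq_zero_iff.mp h2 with ⟨j, hj, hj0⟩
    rcases mul_eq_zero.mp hj0 with h3 | h4
    · rw [Finset.prod_eq_zero hj (by rw [h3]; ring), mul_zero]
    · exact absurd h4 (hμ _ _)

lemma sum_q_eq_one (p : S → A → S → ℝ) (hp1 : ∀ s a, ∑ s', p s a s' = 1)
    (ν : S → A → ℝ) (hν : ∀ s, ∑ a, ν s a = 1) (s : S) (a : A) :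
    ∑ x : S × A, p s a x.1 * ν x.1 x.2 = 1 := by
  rw [Fintype.sum_prod_type]
  have : ∀ s' : S, ∑ a' : A, p s a s' * ν s' a' = p s a s' := by
    intro s'; rw [← Finset.mul_sum, hν, mul_one]
  simp only [this, hp1]

lemma sum_prefixProb_step [Nonempty S] [Nonempty A]
    (p : S → A → S → ℝ) (hp1 : ∀ s a, ∑ s', p s a s' = 1)
    (d₀ : S → ℝ) (ν : S → A → ℝ) (hν : ∀ s, ∑ a, ν s a = 1)
    (H k : ℕ) (hk : k < H)
    (g : (Fin (H+1) → S × A) → ℝ)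
    (hg : ∀ τ τ' : Fin (H+1) → S × A,
      (∀ i : Fin (H+1), (i:ℕ) ≤ k → τ i = τ' i) → g τ = g τ') :
    (∑ τ : Fin (H+1) → S × A, g τ * prefixProb p d₀ ν H (k+1) τ)
        * (Fintype.card (S × A) : ℝ)
      = ∑ τ : Fin (H+1) → S × A, g τ * prefixProb p d₀ ν H k τ := by
  classical
  set j : Fin (H+1) := ⟨k+1, by omega⟩ with hj
  set e := Equiv.funSplitAt j (S × A) with he
  have hsum : ∀ F : (Fin (H+1) → S × A) → ℝ,
      ∑ τ, F τ = ∑ f : {i : Fin (H+1) // i ≠ j} → S × A, ∑ x : S × A, F (e.symm (x, f)) := by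
    intro F
    rw [← Equiv.sum_comp e.symm, Fintype.sum_prod_type, Finset.sum_comm]
  have hcoord : ∀ (x : S × A) (f : {i : Fin (H+1) // i ≠ j} → S × A)
      (i : Fin (H+1)) (hi : i ≠ j), e.symm (x, f) i = f ⟨i, hi⟩ := by
    intro x f i hi
    simp [he, Equiv.funSplitAt, Equiv.piSplitAt, dif_neg hi]
  have hcoordj : ∀ (x : S × A) (f : {i : Fin (H+1) // i ≠ j} → S × A),
      e.symm (x, f) j = x := by
    intro x f
    simp [he, Equiv.funSplitAt, Equiv.piSplitAt]
  have hagree : ∀ (x x' : S × A) (f : {i : Fin (H+1) // i ≠ j} → S × A)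
      (i : Fin (H+1)), (i:ℕ) ≤ k → e.symm (x, f) i = e.symm (x', f) i := by
    intro x x' f i hi
    have hij : i ≠ j := by intro h; rw [h] at hi; simp [hj] at hi
    rw [hcoord x f i hij, hcoord x' f i hij]
  obtain ⟨x₁⟩ : Nonempty (S × A) := inferInstance
  have hG : ∀ (x : S × A) (f : {i : Fin (H+1) // i ≠ j} → S × A),
      g (e.symm (x, f)) * prefixProb p d₀ ν H k (e.symm (x, f))
        = g (e.symm (x₁, f)) * prefixProb p d₀ ν H k (e.symm (x₁, f)) := by
    intro x f
    rw [hg _ _ (hagree x x₁ f), prefixProb_congr _ _ _ _ _ _ _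
      (fun i hi => hagree x x₁ f i (by omega))]
  rw [hsum, hsum, Finset.sum_mul]
  refine Finset.sum_congr rfl fun f _ => ?_
  have hkcoord : ∀ x : S × A, e.symm (x, f) ⟨k, by omega⟩ = e.symm (x₁, f) ⟨k, by omega⟩ :=
    fun x => hagree x x₁ f ⟨k, by omega⟩ (le_refl _)
  have hstep : ∀ x : S × A,
      g (e.symm (x, f)) * prefixProb p d₀ ν H (k+1) (e.symm (x, f))
        = (g (e.symm (x₁, f)) * prefixProb p d₀ ν H k (e.symm (x₁, f)))
          * (p (e.symm (x₁, f) ⟨k, by omega⟩).1 (e.symm (x₁, f) ⟨k, by omega⟩).2 x.1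
              * ν x.1 x.2) := by
    intro x
    rw [prefixProb_succ p d₀ ν H k hk, hcoordj x f, hkcoord x, ← mul_assoc, hG x f]
  rw [Finset.sum_congr rfl fun x _ => hstep x, ← Finset.mul_sum,
    sum_q_eq_one p hp1 ν hν, mul_one]
  rw [Finset.sum_congr rfl fun x _ => hG x _]
  rw [Finset.sum_const, nsmul_eq_mul, Finset.card_univ, mul_comm]

lemma sum_prefixProb_eq_aux [Nonempty S] [Nonempty A]
    (p : S → A → S → ℝ) (hp1 : ∀ s a, ∑ s', p s a s' = 1)
    (d₀ : S → ℝ) (ν : S → A → ℝ) (hν : ∀ s, ∑ a, ν s a = 1)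
    (H : ℕ) :
    ∀ (m k : ℕ), k + m ≤ H →
    ∀ (g : (Fin (H+1) → S × A) → ℝ),
      (∀ τ τ' : Fin (H+1) → S × A,
        (∀ i : Fin (H+1), (i:ℕ) ≤ k → τ i = τ' i) → g τ = g τ') →
    (∑ τ : Fin (H+1) → S × A, g τ * prefixProb p d₀ ν H (k+m) τ)
        * (Fintype.card (S × A) : ℝ) ^ m
      = ∑ τ : Fin (H+1) → S × A, g τ * prefixProb p d₀ ν H k τ := by
  intro m
  induction m with
  | zero => intro k _ g _; simp
  | succ m ih =>
    intro k hkm g hg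
    have hg' : ∀ τ τ' : Fin (H+1) → S × A,
        (∀ i : Fin (H+1), (i:ℕ) ≤ k + 1 → τ i = τ' i) → g τ = g τ' :=
      fun τ τ' h => hg τ τ' fun i hi => h i (by omega)
    have h1 := ih (k+1) (by omega) g hg'
    have h2 := sum_prefixProb_step p hp1 d₀ ν hν H k (by omega) g hg
    calc (∑ τ : Fin (H+1) → S × A, g τ * prefixProb p d₀ ν H (k+(m+1)) τ)
          * (Fintype.card (S × A) : ℝ) ^ (m+1)
        = ((∑ τ : Fin (H+1) → S × A, g τ * prefixProb p d₀ ν H ((k+1)+m) τ)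
            * (Fintype.card (S × A) : ℝ) ^ m) * (Fintype.card (S × A) : ℝ) := by
          rw [show k+(m+1) = (k+1)+m by omega]; ring
      _ = (∑ τ : Fin (H+1) → S × A, g τ * prefixProb p d₀ ν H (k+1) τ)
            * (Fintype.card (S × A) : ℝ) := by rw [h1]
      _ = _ := h2

end Aux

/-- The surrogate objective is a global lower bound on the finite-horizon expected
return: `J_μ(π) ≤ J_H(π)`. -/
theorem surrogate_lower_bound
    {S A : Type*} [Fintype S] [Fintype A] [DecidableEq S] [DecidableEq A]
    [Nonempty S] [Nonempty A]
    (p : S → A → S → ℝ) (hp0 : ∀ s a s', 0 ≤ p s a s') (hp1 : ∀ s a, ∑ s', p s a s' = 1)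
    (r : S → A → ℝ) (hr : ∀ s a, 0 < r s a)
    (d₀ : S → ℝ) (hd₀ : ∀ s, 0 ≤ d₀ s) (hd₀sum : ∑ s, d₀ s = 1)
    (γ : ℝ) (hγ0 : 0 ≤ γ) (hγ1 : γ < 1)
    (H : ℕ) (π μ : S → A → ℝ)
    (hπpos : ∀ s a, 0 < π s a) (hπsum : ∀ s, ∑ a, π s a = 1)
    (hμpos : ∀ s a, 0 < μ s a) (hμsum : ∀ s, ∑ a, μ s a = 1) :
    Jsur p r d₀ γ H μ π ≤ Jhor p r d₀ γ H π := by
  unfold Jsur Jhor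
  refine Finset.sum_le_sum fun h _ => ?_
  refine mul_le_mul_of_nonneg_left ?_ (pow_nonneg hγ0 _)
  have hhH : (h : ℕ) ≤ H := Fin.is_le h
  set N : ℝ := (Fintype.card (S × A) : ℝ) with hN
  have hNpos : 0 < N := by
    rw [hN]; exact_mod_cast Fintype.card_pos
  set m := H - (h : ℕ) with hm
  -- step 1: bound log by ratio
  have step1 : ∑ τ : Fin (H + 1) → S × A, r (τ h).1 (τ h).2 *
        (1 + Real.log (prefixProb p d₀ π H (h : ℕ) τ / prefixProb p d₀ μ H (h : ℕ) τ)) *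
        trajProb p d₀ μ H τ
      ≤ ∑ τ : Fin (H + 1) → S × A, (r (τ h).1 (τ h).2 *
        (prefixProb p d₀ π H (h : ℕ) τ / prefixProb p d₀ μ H (h : ℕ) τ)) *
        prefixProb p d₀ μ H H τ := by
    refine Finset.sum_le_sum fun τ _ => ?_
    unfold trajProb
    by_cases h0 : prefixProb p d₀ μ H H τ = 0
    · rw [h0, mul_zero, mul_zero]
    · have hπh : 0 < prefixProb p d₀ π H (h : ℕ) τ :=
        prefixProb_pos_of_ne p hp0 d₀ hd₀ μ π hπpos H _ τ h0
      have hμh : 0 < prefixProb p d₀ μ H (h : ℕ) τ :=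
        prefixProb_pos_of_ne p hp0 d₀ hd₀ μ μ hμpos H _ τ h0
      have hμH : 0 < prefixProb p d₀ μ H H τ :=
        prefixProb_pos_of_ne p hp0 d₀ hd₀ μ μ hμpos H _ τ h0
      have hx : 0 < prefixProb p d₀ π H (h : ℕ) τ / prefixProb p d₀ μ H (h : ℕ) τ :=
        div_pos hπh hμh
      have hlog := Real.log_le_sub_one_of_pos hx
      refine mul_le_mul_of_nonneg_right (mul_le_mul_of_nonneg_left ?_ (hr _ _).le) hμH.le
      linarith
  -- step 2: change of measure
  have step2 : ∑ τ : Fin (H + 1) → S × A, (r (τ h).1 (τ h).2 *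
        (prefixProb p d₀ π H (h : ℕ) τ / prefixProb p d₀ μ H (h : ℕ) τ)) *
        prefixProb p d₀ μ H H τ
      = ∑ τ : Fin (H + 1) → S × A, r (τ h).1 (τ h).2 * trajProb p d₀ π H τ := by
    have hμne : ∀ s a, μ s a ≠ 0 := fun s a => (hμpos s a).ne'
    refine mul_right_cancel₀ (b := N ^ m) (pow_ne_zero m hNpos.ne') ?_
    have key1 := sum_prefixProb_eq_aux p hp1 d₀ μ hμsum H m (h : ℕ) (by omega)
      (fun τ => r (τ h).1 (τ h).2 *
        (prefixProb p d₀ π H (h : ℕ) τ / prefixProb p d₀ μ H (h : ℕ) τ))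
      (fun τ τ' hag => by
        simp only [hag h (le_refl _), prefixProb_congr p d₀ π H _ τ τ' hag,
          prefixProb_congr p d₀ μ H _ τ τ' hag])
    have key2 := sum_prefixProb_eq_aux p hp1 d₀ π hπsum H m (h : ℕ) (by omega)
      (fun τ => r (τ h).1 (τ h).2)
      (fun τ τ' hag => by simp only [hag h (le_refl _)])
    rw [show (h : ℕ) + m = H by omega] at key1 key2
    rw [key1]
    unfold trajProb
    rw [key2]
    refine Finset.sum_congr rfl fun τ _ => ?_
    by_cases h0 : prefixProb p d₀ μ H (h : ℕ) τ = 0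
    · rw [h0, prefixProb_zero_trans p d₀ μ π hμne H _ τ h0]
      simp
    · field_simp
  calc _ ≤ _ := step1
    _ = _ := step2
end

section
/- Let α ∈ (0,1) and let θ* ∈ ℝ^d satisfy ∇J(θ*) = 0 (i.e., θ* is a stationary point of the expected return). Define the polynomially-improved policy I^{1/α}π_{θ*} by (I^{1/α}π_{θ*})(τ) = R(τ)^{1/α} π_{θ*}(τ)/Z with Z = Σ_τ R(τ)^{1/α} π_{θ*}(τ). Then θ* is a critical point of the map θ ↦ D^α(I^{1/α}π_{θ*} ‖ π_θ); that is, the gradient of the Rényi α-divergence projection objective at θ = θ* is zero, so the optimal policy is a fixed point of the composition of the polynomial improvement operator I^{1/α} and the α-divergence projection. -/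
/-- Rényi divergence of order `α` between strictly positive pmfs:
`D^α(p‖q) = (1/(α−1)) * log (∑ τ, p τ ^ α * q τ ^ (1−α))`. -/
noncomputable def renyiDiv {T : Type*} [Fintype T] (α : ℝ) (p q : T → ℝ) : ℝ :=
  (1 / (α - 1)) * Real.log (∑ τ, p τ ^ α * q τ ^ (1 - α))

/-- Polynomially-improved policy `(I^{1/α}π)(τ) = R τ ^ (1/α) * π τ / Z` with
`Z = ∑ τ, R τ ^ (1/α) * π τ`. -/
noncomputable def polyImp {T : Type*} [Fintype T] (α : ℝ) (R π : T → ℝ) (τ : T) : ℝ :=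
  R τ ^ (1 / α) * π τ / ∑ τ', R τ' ^ (1 / α) * π τ'

/-!
Write `p = I^{1/α}π_{θ*}` and `Z = ∑ τ, R τ ^ (1/α) π_{θ*} τ`. Then `p ^ α = R π_{θ*} ^ α / Z ^ α`,
so at `θ*` the weights `p ^ α π_{θ*} ^ (-α)` in the derivative of `∑ τ, p τ ^ α π_θ τ ^ (1-α)` are
proportional to `R`, and that sum itself equals `J(θ*) / Z ^ α`. Consequently
`∇_θ D^α(p ‖ π_θ) = -∇J / J` at `θ*`, which vanishes at a stationary point of `J`.
-/

open Finset

section PolyImp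

variable {T : Type*} [Fintype T]

section Algebra

variable {α : ℝ} {R π : T → ℝ}

theorem polyImp_rpow (hα : α ≠ 0) (hR : ∀ τ, 0 ≤ R τ) (hπ : ∀ τ, 0 ≤ π τ) (τ : T) :
    polyImp α R π τ ^ α = R τ * π τ ^ α / (∑ τ', R τ' ^ (1 / α) * π τ') ^ α := by
  have hRα : (R τ ^ (1 / α)) ^ α = R τ := by
    rw [← Real.rpow_mul (hR τ), one_div_mul_cancel hα, Real.rpow_one]
  rw [polyImp, Real.div_rpow (mul_nonneg (Real.rpow_nonneg (hR τ) _) (hπ τ))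
      (sum_nonneg fun τ' _ => mul_nonneg (Real.rpow_nonneg (hR τ') _) (hπ τ')),
    Real.mul_rpow (Real.rpow_nonneg (hR τ) _) (hπ τ), hRα]

theorem sum_polyImp_rpow_mul_rpow (hα : α ≠ 0) (hR : ∀ τ, 0 ≤ R τ) (hπ : ∀ τ, 0 ≤ π τ) :
    ∑ τ, polyImp α R π τ ^ α * π τ ^ (1 - α) = Jexp R π / (∑ τ, R τ ^ (1 / α) * π τ) ^ α := by
  rw [Jexp, sum_div]
  refine sum_congr rfl fun τ _ => ?_
  have hexp : α + (1 - α) = 1 := add_sub_cancel α 1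
  rw [polyImp_rpow hα hR hπ, div_mul_eq_mul_div, mul_assoc,
    ← Real.rpow_add' (hπ τ) (hexp.symm ▸ one_ne_zero), hexp, Real.rpow_one]

end Algebra

section Derivatives

variable {E : Type*} [NormedAddCommGroup E] [NormedSpace ℝ E] {x : E}

theorem hasFDerivAt_jexp {R : T → ℝ} {π : E → T → ℝ} {π' : T → E →L[ℝ] ℝ}
    (hπ : ∀ τ, HasFDerivAt (fun θ => π θ τ) (π' τ) x) :
    HasFDerivAt (fun θ => Jexp R (π θ)) (∑ τ, R τ • π' τ) x :=
  HasFDerivAt.fun_sum fun τ _ => (hπ τ).const_mul (R τ)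

theorem hasFDerivAt_renyiDiv_right {α : ℝ} {p : T → ℝ} {q : E → T → ℝ} {q' : T → E →L[ℝ] ℝ}
    (hq : ∀ τ, HasFDerivAt (fun θ => q θ τ) (q' τ) x) (hqx : ∀ τ, q x τ ≠ 0)
    (hS : ∑ τ, p τ ^ α * q x τ ^ (1 - α) ≠ 0) :
    HasFDerivAt (fun θ => renyiDiv α p (q θ))
      ((1 / (α - 1) * (∑ τ, p τ ^ α * q x τ ^ (1 - α))⁻¹) •
        ∑ τ, (p τ ^ α * (1 - α) * q x τ ^ (-α)) • q' τ) x := by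
  have hsum : HasFDerivAt (fun θ => ∑ τ, p τ ^ α * q θ τ ^ (1 - α))
      (∑ τ, (p τ ^ α * (1 - α) * q x τ ^ (-α)) • q' τ) x := by
    refine HasFDerivAt.fun_sum fun τ _ => ?_
    have hterm := ((hq τ).rpow_const (p := 1 - α) (Or.inl (hqx τ))).const_mul (p τ ^ α)
    rwa [smul_smul, sub_sub_cancel_left, ← mul_assoc] at hterm
  rw [mul_smul]
  exact (hsum.log hS).const_mul (1 / (α - 1))

theorem hasFDerivAt_renyiDiv_polyImp [Nonempty T] {α : ℝ} (hα0 : α ≠ 0) (hα1 : α ≠ 1)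
    {R : T → ℝ} (hR : ∀ τ, 0 < R τ) {π : E → T → ℝ} {π' : T → E →L[ℝ] ℝ}
    (hπ : ∀ τ, HasFDerivAt (fun θ => π θ τ) (π' τ) x) (hπx : ∀ τ, 0 < π x τ) :
    HasFDerivAt (fun θ => renyiDiv α (polyImp α R (π x)) (π θ))
      (-(Jexp R (π x))⁻¹ • ∑ τ, R τ • π' τ) x := by
  have hZ : 0 < ∑ τ, R τ ^ (1 / α) * π x τ :=
    sum_pos (fun τ _ => mul_pos (Real.rpow_pos_of_pos (hR τ) _) (hπx τ)) univ_nonempty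
  have hJ : 0 < Jexp R (π x) := sum_pos (fun τ _ => mul_pos (hR τ) (hπx τ)) univ_nonempty
  have hcoeff : ∀ τ, polyImp α R (π x) τ ^ α * (1 - α) * π x τ ^ (-α) =
      (1 - α) / (∑ τ, R τ ^ (1 / α) * π x τ) ^ α * R τ := by
    intro τ
    have hπα : π x τ ^ α ≠ 0 := (Real.rpow_pos_of_pos (hπx τ) α).ne'
    rw [polyImp_rpow hα0 (fun τ => (hR τ).le) (fun τ => (hπx τ).le), Real.rpow_neg (hπx τ).le]
    field_simp
  have hS := sum_polyImp_rpow_mul_rpow hα0 (fun τ => (hR τ).le) (fun τ => (hπx τ).le)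
  have hder := hasFDerivAt_renyiDiv_right hπ (fun τ => (hπx τ).ne') (by rw [hS]; positivity)
  simp_rw [hcoeff, mul_smul _ (R _), ← smul_sum, smul_smul, hS] at hder
  convert hder using 2
  have hα1' : α - 1 ≠ 0 := sub_ne_zero.mpr hα1
  field_simp
  ring

theorem gradient_renyiDiv_polyImp {F : Type*} [NormedAddCommGroup F] [InnerProductSpace ℝ F]
    [CompleteSpace F] [Nonempty T] {α : ℝ} (hα0 : α ≠ 0) (hα1 : α ≠ 1)
    {R : T → ℝ} (hR : ∀ τ, 0 < R τ) {π : F → T → ℝ} {y : F}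
    (hπ : ∀ τ, DifferentiableAt ℝ (fun θ => π θ τ) y) (hπy : ∀ τ, 0 < π y τ) :
    gradient (fun θ => renyiDiv α (polyImp α R (π y)) (π θ)) y =
      -(Jexp R (π y))⁻¹ • gradient (fun θ => Jexp R (π θ)) y := by
  have hπ' := fun τ => (hπ τ).hasFDerivAt
  rw [gradient, gradient, (hasFDerivAt_renyiDiv_polyImp hα0 hα1 hR hπ' hπy).fderiv,
    (hasFDerivAt_jexp hπ').fderiv, map_smulₛₗ]
  rfl

end Derivatives

end PolyImp

theorem fixed_point_alpha_divergence_general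
    {T : Type*} [Fintype T] [Nonempty T] {d : ℕ}
    (α : ℝ) (hα0 : 0 < α) (hα1 : α < 1)
    (R : T → ℝ) (hR : ∀ τ, 0 < R τ)
    (π : EuclideanSpace ℝ (Fin d) → T → ℝ)
    (hπpos : ∀ θ τ, 0 < π θ τ)
    (hπdiff : ∀ τ, Differentiable ℝ (fun θ => π θ τ))
    (θs : EuclideanSpace ℝ (Fin d))
    (hstat : gradient (fun θ => Jexp R (π θ)) θs = 0) :
    gradient (fun θ => renyiDiv α (polyImp α R (π θs)) (π θ)) θs = 0 := by
  rw [gradient_renyiDiv_polyImp hα0.ne' hα1.ne hR (fun τ => hπdiff τ θs) (hπpos θs), hstat,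
    smul_zero]

/-- If `θ*` is a stationary point of the expected return `J` and `α ∈ (0,1)`, then `θ*`
is a critical point of the Rényi `α`-divergence projection objective
`θ ↦ D^α(I^{1/α}π_{θ*} ‖ π_θ)`: the optimal policy is a fixed point of the composition of
the polynomial improvement operator `I^{1/α}` and the `α`-divergence projection. -/
theorem fixed_point_alpha_divergence
    {T : Type*} [Fintype T] [Nonempty T] {d : ℕ}
    (α : ℝ) (hα0 : 0 < α) (hα1 : α < 1)
    (R : T → ℝ) (hR : ∀ τ, 0 < R τ)
    (π : EuclideanSpace ℝ (Fin d) → T → ℝ)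
    (hπpos : ∀ θ τ, 0 < π θ τ)
    (hπsum : ∀ θ, ∑ τ, π θ τ = 1)
    (hπdiff : ∀ τ, Differentiable ℝ (fun θ => π θ τ))
    (θs : EuclideanSpace ℝ (Fin d))
    (hstat : gradient (fun θ => Jexp R (π θ)) θs = 0) :
    gradient (fun θ => renyiDiv α (polyImp α R (π θs)) (π θ)) θs = 0 :=
  fixed_point_alpha_divergence_general α hα0 hα1 R hR π hπpos hπdiff θs hstat
end
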